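/- (Summability over angular channels) Let s ∈ (1/2, 3/4] and for κ ∈ ℤ\{0} and r > 0 define F_κ(r) = |κ|^{1-4s} r^{-2} [(r/|κ|)^{2s-1} 1_{r≤|κ|} + (r/|κ|)^{4s-1} 1_{|κ|≤r≤κ²} + |κ|^{4s-1} 1_{r≥κ²}]. Then there is a constant A_s such that Σ_{κ∈ℤ\{0}} F_κ(r) ≤ A_s (r^{2s-3} 1_{r≤1} + r^{-3/2} 1_{r>1}) for all r > 0. -/
import Mathlib

open Real Finset


/-- The per-channel bound
`F_κ(r) = |κ|^{1-4s} r⁻² [(r/|κ|)^{2s-1} 1_{r≤|κ|} + (r/|κ|)^{4s-1} 1_{|κ|≤r≤κ²}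
+ |κ|^{4s-1} 1_{r≥κ²}]`. -/
noncomputable def channelBound (s : ℝ) (κ : ℤ) (r : ℝ) : ℝ :=
  (κ.natAbs : ℝ) ^ (1 - 4 * s) * r ^ (-(2 : ℝ)) *
    ((if r ≤ (κ.natAbs : ℝ) then (r / (κ.natAbs : ℝ)) ^ (2 * s - 1) else 0) +
      (if (κ.natAbs : ℝ) ≤ r ∧ r ≤ (κ.natAbs : ℝ) ^ 2 then
        (r / (κ.natAbs : ℝ)) ^ (4 * s - 1) else 0) +
      (if (κ.natAbs : ℝ) ^ 2 ≤ r then (κ.natAbs : ℝ) ^ (4 * s - 1) else 0))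

lemma bernoulli_step {ε : ℝ} (hε : 1 ≤ ε) {k : ℕ} (hk : 1 ≤ k) :
    ε * ((k : ℝ) + 1) ^ (-(1 + ε)) ≤ (k : ℝ) ^ (-ε) - ((k : ℝ) + 1) ^ (-ε) := by
  have hk0 : (0 : ℝ) < k := by exact_mod_cast hk
  have hk1 : (0 : ℝ) < (k : ℝ) + 1 := by linarith
  have hεpos : (0 : ℝ) < ε := by linarith
  have hb : 1 + ε * (1 / k) ≤ (1 + 1 / (k : ℝ)) ^ ε :=
    one_add_mul_self_le_rpow_one_add (le_trans (by norm_num : (-1:ℝ) ≤ 0) (by positivity)) hε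
  have h1 : (1 : ℝ) + 1 / k = ((k : ℝ) + 1) / k := by field_simp
  rw [h1, Real.div_rpow hk1.le hk0.le] at hb
  set a := (k : ℝ) ^ ε with hadef
  set b := ((k : ℝ) + 1) ^ ε with hbdef
  have ha : (0 : ℝ) < a := rpow_pos_of_pos hk0 _
  have hbp : (0 : ℝ) < b := rpow_pos_of_pos hk1 _
  have hab : (1 + ε * (1 / k)) * a ≤ b := (le_div_iff₀ ha).mp hb
  have hq : ε * a ≤ (k : ℝ) * (b - a) := by
    have := mul_le_mul_of_nonneg_right hab hk0.le
    have e1 : (1 + ε * (1 / (k:ℝ))) * a * k = k * a + ε * a := by field_simp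
    nlinarith [this]
  have hba : a ≤ b := by nlinarith
  have hsplit : ((k : ℝ) + 1) ^ (-(1 + ε)) = (((k : ℝ) + 1) * b)⁻¹ := by
    rw [show -(1 + ε) = (-1) + (-ε) by ring, Real.rpow_add hk1, Real.rpow_neg_one,
      Real.rpow_neg hk1.le, mul_inv]
  rw [hsplit, Real.rpow_neg hk0.le, Real.rpow_neg hk1.le]
  have h2 : a⁻¹ - b⁻¹ = (b - a) / (a * b) := by field_simp
  rw [h2, mul_comm ε, ← div_eq_inv_mul, div_le_div_iff₀ (by positivity) (by positivity)]
  nlinarith [mul_le_mul_of_nonneg_right hq hbp.le, mul_nonneg (sub_nonneg.mpr hba) hbp.le]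

lemma tail_summable {p : ℝ} (hp : p < -1) (m : ℕ) :
    Summable (fun n : ℕ => if m ≤ n then (n : ℝ) ^ p else 0) := by
  refine Summable.of_nonneg_of_le (fun n => ?_) (fun n => ?_) (Real.summable_nat_rpow.2 hp)
  · split <;> positivity
  · split
    · exact le_rfl
    · positivity

lemma tail_tsum_le {ε : ℝ} (hε : 1 ≤ ε) {m : ℕ} (hm : 1 ≤ m) :
    (∑' n : ℕ, if m ≤ n then (n : ℝ) ^ (-(1 + ε)) else 0)
      ≤ (1 + 1 / ε) * (m : ℝ) ^ (-ε) := by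
  have hεpos : (0 : ℝ) < ε := by linarith
  have hm0 : (0 : ℝ) < m := by exact_mod_cast hm
  have hsum := tail_summable (p := -(1 + ε)) (by linarith) m
  refine Summable.tsum_le_of_sum_le hsum (fun u => ?_)
  -- reduce to ranges
  obtain ⟨N, hN⟩ : ∃ N : ℕ, u ⊆ Finset.range N ∧ m < N := by
    refine ⟨max (u.sup id + 1) (m + 1), ⟨fun x hx => Finset.mem_range.2 ?_, ?_⟩⟩
    · exact lt_of_le_of_lt (Finset.le_sup (f := id) hx) (lt_of_lt_of_le (Nat.lt_succ_self _) (le_max_left _ _))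
    · exact lt_of_lt_of_le (Nat.lt_succ_self m) (le_max_right _ _)
  obtain ⟨hN1, hN2⟩ := hN
  have step1 : ∑ n ∈ u, (if m ≤ n then (n : ℝ) ^ (-(1 + ε)) else 0)
      ≤ ∑ n ∈ Finset.range N, (if m ≤ n then (n : ℝ) ^ (-(1 + ε)) else 0) := by
    refine Finset.sum_le_sum_of_subset_of_nonneg hN1 (fun n _ _ => ?_)
    split <;> positivity
  refine step1.trans ?_
  have hty : Finset.range N = Finset.Ico 0 N := by
    ext x; simp
  rw [hty, ← Finset.sum_Ico_consecutive _ (Nat.zero_le m) hN2.le]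
  have hz : ∑ n ∈ Finset.Ico 0 m, (if m ≤ n then (n : ℝ) ^ (-(1 + ε)) else 0) = 0 := by
    refine Finset.sum_eq_zero (fun n hn => ?_)
    rw [Finset.mem_Ico] at hn
    rw [if_neg (by omega)]
  rw [hz, zero_add]
  have hind : ∀ n ∈ Finset.Ico m N, (if m ≤ n then (n : ℝ) ^ (-(1 + ε)) else 0)
      = (n : ℝ) ^ (-(1 + ε)) := by
    intro n hn; rw [Finset.mem_Ico] at hn; rw [if_pos hn.1]
  rw [Finset.sum_congr rfl hind]
  -- split off the first term
  rw [Finset.sum_eq_sum_Ico_succ_bot hN2]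
  have hfirst : (m : ℝ) ^ (-(1 + ε)) ≤ (m : ℝ) ^ (-ε) :=
    Real.rpow_le_rpow_of_exponent_le (by exact_mod_cast hm) (by linarith)
  have htail : ∑ n ∈ Finset.Ico (m + 1) N, (n : ℝ) ^ (-(1 + ε))
      ≤ (m : ℝ) ^ (-ε) / ε := by
    have hstep : ∀ n ∈ Finset.Ico (m + 1) N, (n : ℝ) ^ (-(1 + ε))
        ≤ (((n - 1 : ℕ) : ℝ) ^ (-ε) - ((n : ℕ) : ℝ) ^ (-ε)) / ε := by
      intro n hn
      rw [Finset.mem_Ico] at hn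
      have hn1 : 1 ≤ n - 1 := by omega
      have := bernoulli_step hε hn1
      have hcast : ((n - 1 : ℕ) : ℝ) + 1 = (n : ℝ) := by
        have : n - 1 + 1 = n := by omega
        exact_mod_cast congrArg (Nat.cast : ℕ → ℝ) this
      rw [hcast] at this
      rw [le_div_iff₀ hεpos, mul_comm]
      exact this
    refine (Finset.sum_le_sum hstep).trans ?_
    rw [Finset.sum_Ico_eq_sum_range]
    have htel : ∑ i ∈ Finset.range (N - (m + 1)),
        ((((m + 1 + i - 1 : ℕ) : ℝ)) ^ (-ε) - (((m + 1 + i : ℕ) : ℝ)) ^ (-ε)) / ε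
        = ((m : ℝ) ^ (-ε) - (((m + (N - (m+1)) : ℕ) : ℝ)) ^ (-ε)) / ε := by
      rw [← Finset.sum_div]
      congr 1
      have := Finset.sum_range_sub' (f := fun i => (((m + i : ℕ) : ℝ)) ^ (-ε)) (n := N - (m + 1))
      simp only [Nat.add_zero] at this
      rw [← this]
      refine Finset.sum_congr rfl (fun i _ => ?_)
      have e1 : m + 1 + i - 1 = m + i := by omega
      have e2 : m + 1 + i = m + (i + 1) := by omega
      rw [e1, e2]
    rw [htel]
    have : (0:ℝ) ≤ (((m + (N - (m+1)) : ℕ) : ℝ)) ^ (-ε) := by positivity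
    rw [div_le_div_iff₀ hεpos hεpos]
    nlinarith
  calc (m : ℝ) ^ (-(1 + ε)) + ∑ n ∈ Finset.Ico (m + 1) N, (n : ℝ) ^ (-(1 + ε))
      ≤ (m : ℝ) ^ (-ε) + (m : ℝ) ^ (-ε) / ε := add_le_add hfirst htail
    _ = (1 + 1 / ε) * (m : ℝ) ^ (-ε) := by field_simp

noncomputable def chT1 (s r : ℝ) (n : ℕ) : ℝ :=
  if n = 0 then 0 else (n : ℝ) ^ (1 - 4 * s) * r ^ (-(2 : ℝ)) *
    (if r ≤ (n : ℝ) then (r / (n : ℝ)) ^ (2 * s - 1) else 0)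

noncomputable def chT2 (s r : ℝ) (n : ℕ) : ℝ :=
  if n = 0 then 0 else (n : ℝ) ^ (1 - 4 * s) * r ^ (-(2 : ℝ)) *
    (if (n : ℝ) ≤ r ∧ r ≤ (n : ℝ) ^ 2 then (r / (n : ℝ)) ^ (4 * s - 1) else 0)

noncomputable def chT3 (s r : ℝ) (n : ℕ) : ℝ :=
  if n = 0 then 0 else (n : ℝ) ^ (1 - 4 * s) * r ^ (-(2 : ℝ)) *
    (if (n : ℝ) ^ 2 ≤ r then (n : ℝ) ^ (4 * s - 1) else 0)

noncomputable def Hfun (s r : ℝ) (n : ℕ) : ℝ := chT1 s r n + chT2 s r n + chT3 s r n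

lemma chT1_nonneg (s r : ℝ) (hr : 0 ≤ r) (n : ℕ) : 0 ≤ chT1 s r n := by
  unfold chT1; split
  · exact le_rfl
  · have : (0:ℝ) ≤ r / n := by positivity
    split <;> positivity

lemma chT2_nonneg (s r : ℝ) (hr : 0 ≤ r) (n : ℕ) : 0 ≤ chT2 s r n := by
  unfold chT2; split
  · exact le_rfl
  · have : (0:ℝ) ≤ r / n := by positivity
    split <;> positivity

lemma chT3_nonneg (s r : ℝ) (hr : 0 ≤ r) (n : ℕ) : 0 ≤ chT3 s r n := by
  unfold chT3; split
  · exact le_rfl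
  · split <;> positivity

lemma Hfun_nonneg (s r : ℝ) (hr : 0 ≤ r) (n : ℕ) : 0 ≤ Hfun s r n := by
  have := chT1_nonneg s r hr n; have := chT2_nonneg s r hr n; have := chT3_nonneg s r hr n
  unfold Hfun; linarith

lemma channelBound_eq (s r : ℝ) (κ : ℤ) (hκ : κ ≠ 0) :
    channelBound s κ r = Hfun s r κ.natAbs := by
  have hn : κ.natAbs ≠ 0 := Int.natAbs_ne_zero.mpr hκ
  unfold channelBound Hfun chT1 chT2 chT3
  rw [if_neg hn, if_neg hn, if_neg hn]
  ring

lemma val1 {s r : ℝ} (hr : 0 < r) {n : ℕ} (hn : n ≠ 0) :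
    (n : ℝ) ^ (1 - 4 * s) * r ^ (-(2 : ℝ)) * (r / (n : ℝ)) ^ (2 * s - 1)
      = r ^ (2 * s - 3) * (n : ℝ) ^ (2 - 6 * s) := by
  have hn0 : (0 : ℝ) < n := by exact_mod_cast Nat.pos_of_ne_zero hn
  rw [Real.div_rpow hr.le (Nat.cast_nonneg n), div_eq_mul_inv,
    ← Real.rpow_neg (Nat.cast_nonneg n)]
  rw [show (n : ℝ) ^ (1 - 4 * s) * r ^ (-(2:ℝ)) * (r ^ (2 * s - 1) * (n:ℝ) ^ (-(2 * s - 1)))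
      = (r ^ (-(2:ℝ)) * r ^ (2 * s - 1)) * ((n:ℝ) ^ (1 - 4 * s) * (n:ℝ) ^ (-(2 * s - 1))) by ring,
    ← Real.rpow_add hr, ← Real.rpow_add hn0]
  congr 1 <;> · congr 1; ring

lemma val2 {s r : ℝ} (hr : 0 < r) {n : ℕ} (hn : n ≠ 0) :
    (n : ℝ) ^ (1 - 4 * s) * r ^ (-(2 : ℝ)) * (r / (n : ℝ)) ^ (4 * s - 1)
      = r ^ (4 * s - 3) * (n : ℝ) ^ (2 - 8 * s) := by
  have hn0 : (0 : ℝ) < n := by exact_mod_cast Nat.pos_of_ne_zero hn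
  rw [Real.div_rpow hr.le (Nat.cast_nonneg n), div_eq_mul_inv,
    ← Real.rpow_neg (Nat.cast_nonneg n)]
  rw [show (n : ℝ) ^ (1 - 4 * s) * r ^ (-(2:ℝ)) * (r ^ (4 * s - 1) * (n:ℝ) ^ (-(4 * s - 1)))
      = (r ^ (-(2:ℝ)) * r ^ (4 * s - 1)) * ((n:ℝ) ^ (1 - 4 * s) * (n:ℝ) ^ (-(4 * s - 1))) by ring,
    ← Real.rpow_add hr, ← Real.rpow_add hn0]
  congr 1 <;> · congr 1; ring

lemma val3 {s r : ℝ} (hr : 0 < r) {n : ℕ} (hn : n ≠ 0) :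
    (n : ℝ) ^ (1 - 4 * s) * r ^ (-(2 : ℝ)) * (n : ℝ) ^ (4 * s - 1) = r ^ (-(2 : ℝ)) := by
  have hn0 : (0 : ℝ) < n := by exact_mod_cast Nat.pos_of_ne_zero hn
  rw [show (n : ℝ) ^ (1 - 4 * s) * r ^ (-(2:ℝ)) * (n:ℝ) ^ (4 * s - 1)
      = ((n:ℝ) ^ (1 - 4 * s) * (n:ℝ) ^ (4 * s - 1)) * r ^ (-(2:ℝ)) by ring,
    ← Real.rpow_add hn0]
  rw [show (1 - 4 * s) + (4 * s - 1) = 0 by ring, Real.rpow_zero, one_mul]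

section Bounds

variable {s r : ℝ} (hs1 : 1 / 2 < s) (hs2 : s ≤ 3 / 4) (hr : 0 < r)

noncomputable def C1 (s : ℝ) : ℝ := ∑' n : ℕ, (n : ℝ) ^ (2 - 6 * s)
noncomputable def C2 (s : ℝ) : ℝ := ∑' n : ℕ, (n : ℝ) ^ (2 - 8 * s)

include hs1 hr in
lemma chT1_le (n : ℕ) : chT1 s r n ≤ r ^ (2 * s - 3) * (n : ℝ) ^ (2 - 6 * s) := by
  unfold chT1
  split
  · subst ‹n = 0›
    rw [Nat.cast_zero, Real.zero_rpow (by intro h; nlinarith), mul_zero]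
  · split
    · exact le_of_eq (val1 hr ‹n ≠ 0›)
    · rw [mul_zero]; positivity

include hs1 hr in
lemma summable_chT1 : Summable (chT1 s r) := by
  refine Summable.of_nonneg_of_le (chT1_nonneg s r hr.le) (chT1_le hs1 hr)
    ((Real.summable_nat_rpow.2 (by linarith)).mul_left _)

include hs1 hr in
lemma tsum_chT1_le : ∑' n, chT1 s r n ≤ r ^ (2 * s - 3) * C1 s := by
  rw [C1, ← tsum_mul_left]
  exact Summable.tsum_le_tsum (chT1_le hs1 hr) (summable_chT1 hs1 hr)
    ((Real.summable_nat_rpow.2 (by linarith)).mul_left _)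

include hs1 hr in
lemma chT2_le (n : ℕ) : chT2 s r n ≤ r ^ (4 * s - 3) * (n : ℝ) ^ (2 - 8 * s) := by
  unfold chT2
  split
  · subst ‹n = 0›
    rw [Nat.cast_zero, Real.zero_rpow (by intro h; nlinarith), mul_zero]
  · split
    · exact le_of_eq (val2 hr ‹n ≠ 0›)
    · rw [mul_zero]; positivity

include hs1 hr in
lemma summable_chT2 : Summable (chT2 s r) := by
  refine Summable.of_nonneg_of_le (chT2_nonneg s r hr.le) (chT2_le hs1 hr)
    ((Real.summable_nat_rpow.2 (by linarith)).mul_left _)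

include hs1 hr in
lemma tsum_chT2_le : ∑' n, chT2 s r n ≤ r ^ (4 * s - 3) * C2 s := by
  rw [C2, ← tsum_mul_left]
  exact Summable.tsum_le_tsum (chT2_le hs1 hr) (summable_chT2 hs1 hr)
    ((Real.summable_nat_rpow.2 (by linarith)).mul_left _)

include hr in
lemma chT3_support {n : ℕ} (hn : n ∉ Finset.Icc 1 ⌊Real.sqrt r⌋₊) : chT3 s r n = 0 := by
  unfold chT3
  rcases Nat.eq_zero_or_pos n with h0 | h1
  · rw [if_pos h0]
  · rw [if_neg (by omega)]
    rw [Finset.mem_Icc, not_and] at hn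
    have hgt : ⌊Real.sqrt r⌋₊ < n := by
      have := hn h1; omega
    rw [if_neg, mul_zero]
    intro hle
    have hsq : (n : ℝ) ≤ Real.sqrt r := (Real.le_sqrt (Nat.cast_nonneg n) hr.le).mpr hle
    exact absurd (Nat.le_floor hsq) (by omega)

include hr in
lemma summable_chT3 : Summable (chT3 s r) :=
  summable_of_ne_finset_zero (fun n hn => chT3_support hr hn)

include hr in
lemma tsum_chT3_le : ∑' n, chT3 s r n ≤ Real.sqrt r * r ^ (-(2 : ℝ)) := by
  rw [tsum_eq_sum (fun n hn => chT3_support hr hn)]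
  have hle : ∀ n ∈ Finset.Icc 1 ⌊Real.sqrt r⌋₊, chT3 s r n ≤ r ^ (-(2 : ℝ)) := by
    intro n hn
    rw [Finset.mem_Icc] at hn
    unfold chT3
    rw [if_neg (by omega)]
    split
    · exact le_of_eq (val3 hr (by omega))
    · rw [mul_zero]; positivity
  calc ∑ n ∈ Finset.Icc 1 ⌊Real.sqrt r⌋₊, chT3 s r n
      ≤ ∑ n ∈ Finset.Icc 1 ⌊Real.sqrt r⌋₊, r ^ (-(2:ℝ)) := Finset.sum_le_sum hle
    _ = (⌊Real.sqrt r⌋₊ : ℝ) * r ^ (-(2:ℝ)) := by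
        rw [Finset.sum_const, Nat.card_Icc, nsmul_eq_mul]
        norm_num
    _ ≤ Real.sqrt r * r ^ (-(2:ℝ)) := by
        have h1 : (0:ℝ) ≤ r ^ (-(2:ℝ)) := by positivity
        exact mul_le_mul_of_nonneg_right (Nat.floor_le (Real.sqrt_nonneg r)) h1

end Bounds

section Bounds2

variable {s r : ℝ} (hs1 : 1 / 2 < s) (hs2 : s ≤ 3 / 4) (hr : 0 < r)

include hs1 hr in
lemma chT2_le' (n : ℕ) : chT2 s r n ≤
    r ^ (4 * s - 3) * (if ⌈Real.sqrt r⌉₊ ≤ n then (n : ℝ) ^ (-(1 + (8 * s - 3))) else 0) := by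
  have hexp : -(1 + (8 * s - 3)) = 2 - 8 * s := by ring
  unfold chT2
  split
  · have : (0:ℝ) ≤ r ^ (4 * s - 3) * (if ⌈Real.sqrt r⌉₊ ≤ n then (n : ℝ) ^ (-(1 + (8 * s - 3))) else 0) := by
      split <;> positivity
    linarith
  · rename_i hn0
    split
    · rename_i hcond
      have hsn : Real.sqrt r ≤ (n : ℝ) := by
        calc Real.sqrt r ≤ Real.sqrt ((n:ℝ)^2) := Real.sqrt_le_sqrt hcond.2
          _ = (n : ℝ) := Real.sqrt_sq (Nat.cast_nonneg n)
      rw [if_pos (Nat.ceil_le.mpr hsn), hexp]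
      exact le_of_eq (val2 hr hn0)
    · have : (0:ℝ) ≤ r ^ (4 * s - 3) * (if ⌈Real.sqrt r⌉₊ ≤ n then (n : ℝ) ^ (-(1 + (8 * s - 3))) else 0) := by
        split <;> positivity
      rw [mul_zero]
      linarith

include hs1 hs2 in
lemma tsum_chT2_le' (hr1 : 1 < r) :
    ∑' n, chT2 s r n ≤ (1 + 1 / (8 * s - 3)) * r ^ (-(3:ℝ)/2) := by
  have hr : (0:ℝ) < r := by linarith
  set ε := 8 * s - 3 with hεdef
  have hε : 1 ≤ ε := by rw [hεdef]; linarith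
  have hεpos : (0:ℝ) < ε := by linarith
  set m := ⌈Real.sqrt r⌉₊ with hmdef
  have hm : 1 ≤ m := Nat.ceil_pos.mpr (Real.sqrt_pos.mpr hr)
  have hts : Summable (fun n : ℕ => if m ≤ n then (n : ℝ) ^ (-(1 + ε)) else 0) :=
    tail_summable (by linarith) m
  calc ∑' n, chT2 s r n
      ≤ ∑' n : ℕ, r ^ (4 * s - 3) * (if m ≤ n then (n : ℝ) ^ (-(1 + ε)) else 0) :=
        Summable.tsum_le_tsum (chT2_le' hs1 hr) (summable_chT2 hs1 hr) (hts.mul_left _)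
    _ = r ^ (4 * s - 3) * ∑' n : ℕ, (if m ≤ n then (n : ℝ) ^ (-(1 + ε)) else 0) :=
        tsum_mul_left
    _ ≤ r ^ (4 * s - 3) * ((1 + 1 / ε) * (m : ℝ) ^ (-ε)) := by
        have := tail_tsum_le hε hm
        have h0 : (0:ℝ) ≤ r ^ (4 * s - 3) := by positivity
        exact mul_le_mul_of_nonneg_left this h0
    _ ≤ r ^ (4 * s - 3) * ((1 + 1 / ε) * (Real.sqrt r) ^ (-ε)) := by
        have hsp : (0:ℝ) < Real.sqrt r := Real.sqrt_pos.mpr hr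
        have h1 : (Real.sqrt r) ^ ε ≤ (m : ℝ) ^ ε :=
          Real.rpow_le_rpow hsp.le (Nat.le_ceil _) hεpos.le
        have h2 : ((m:ℝ)) ^ (-ε) ≤ (Real.sqrt r) ^ (-ε) := by
          rw [Real.rpow_neg (Nat.cast_nonneg m), Real.rpow_neg hsp.le]
          exact inv_anti₀ (Real.rpow_pos_of_pos hsp ε) h1
        have h3 : (0:ℝ) ≤ r ^ (4 * s - 3) := by positivity
        have h4 : (0:ℝ) ≤ 1 + 1 / ε := by positivity
        exact mul_le_mul_of_nonneg_left (mul_le_mul_of_nonneg_left h2 h4) h3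
    _ = (1 + 1 / ε) * r ^ (-(3:ℝ)/2) := by
        rw [Real.sqrt_eq_rpow, ← Real.rpow_mul hr.le]
        rw [show r ^ (4 * s - 3) * ((1 + 1 / ε) * r ^ (1 / 2 * -ε))
            = (1 + 1 / ε) * (r ^ (4 * s - 3) * r ^ (1 / 2 * -ε)) by ring,
          ← Real.rpow_add hr]
        congr 1
        congr 1
        rw [hεdef]; ring

end Bounds2

lemma C1_nonneg (s : ℝ) : 0 ≤ C1 s := tsum_nonneg (fun n => by positivity)
lemma C2_nonneg (s : ℝ) : 0 ≤ C2 s := tsum_nonneg (fun n => by positivity)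

lemma nat_bound {s r : ℝ} (hs1 : 1 / 2 < s) (hs2 : s ≤ 3 / 4) (hr : 0 < r) :
    Summable (Hfun s r) ∧ ∑' n, Hfun s r n ≤
      (C1 s + C2 s + (1 + 1 / (8 * s - 3)) + 1) *
        (if r ≤ 1 then r ^ (2 * s - 3) else r ^ (-(3:ℝ)/2)) := by
  have hS1 := summable_chT1 hs1 hr
  have hS2 := summable_chT2 hs1 hr
  have hS3 := summable_chT3 (s := s) hr
  have hsummable : Summable (Hfun s r) := by
    have := (hS1.add hS2).add hS3
    exact this.congr (fun n => rfl)
  refine ⟨hsummable, ?_⟩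
  have hsplit : ∑' n, Hfun s r n = (∑' n, chT1 s r n) + (∑' n, chT2 s r n) + (∑' n, chT3 s r n) := by
    rw [← Summable.tsum_add hS1 hS2, ← Summable.tsum_add (hS1.add hS2) hS3]
    rfl
  rw [hsplit]
  have hεpos : (0:ℝ) < 8 * s - 3 := by linarith
  have hinv : (0:ℝ) ≤ 1 / (8 * s - 3) := by positivity
  have hC1 := C1_nonneg s
  have hC2 := C2_nonneg s
  have ht1 := tsum_chT1_le hs1 hr
  have ht3 : ∑' n, chT3 s r n ≤ r ^ (-(3:ℝ)/2) := by
    refine (tsum_chT3_le (s := s) hr).trans (le_of_eq ?_)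
    rw [Real.sqrt_eq_rpow, ← Real.rpow_add hr]
    congr 1; ring
  by_cases hr1 : r ≤ 1
  · rw [if_pos hr1]
    have hx : (0:ℝ) ≤ r ^ (2 * s - 3) := by positivity
    have ht2 : ∑' n, chT2 s r n ≤ r ^ (2 * s - 3) * C2 s := by
      refine (tsum_chT2_le hs1 hr).trans ?_
      exact mul_le_mul_of_nonneg_right
        (Real.rpow_le_rpow_of_exponent_ge hr hr1 (by linarith)) hC2
    have ht3' : ∑' n, chT3 s r n ≤ r ^ (2 * s - 3) := by
      refine ht3.trans ?_
      exact Real.rpow_le_rpow_of_exponent_ge hr hr1 (by linarith)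
    calc (∑' n, chT1 s r n) + (∑' n, chT2 s r n) + (∑' n, chT3 s r n)
        ≤ r ^ (2 * s - 3) * C1 s + r ^ (2 * s - 3) * C2 s + r ^ (2 * s - 3) :=
          add_le_add (add_le_add ht1 ht2) ht3'
      _ = (C1 s + C2 s + 1) * r ^ (2 * s - 3) := by ring
      _ ≤ (C1 s + C2 s + (1 + 1 / (8 * s - 3)) + 1) * r ^ (2 * s - 3) :=
          mul_le_mul_of_nonneg_right (by linarith) hx
  · rw [if_neg hr1]
    push_neg at hr1
    have hx : (0:ℝ) ≤ r ^ (-(3:ℝ)/2) := by positivity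
    have ht1' : ∑' n, chT1 s r n ≤ r ^ (-(3:ℝ)/2) * C1 s := by
      refine ht1.trans ?_
      exact mul_le_mul_of_nonneg_right
        (Real.rpow_le_rpow_of_exponent_le hr1.le (by linarith)) hC1
    have ht2 := tsum_chT2_le' hs1 hs2 hr1
    calc (∑' n, chT1 s r n) + (∑' n, chT2 s r n) + (∑' n, chT3 s r n)
        ≤ r ^ (-(3:ℝ)/2) * C1 s + (1 + 1 / (8 * s - 3)) * r ^ (-(3:ℝ)/2) + r ^ (-(3:ℝ)/2) :=
          add_le_add (add_le_add ht1' ht2) ht3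
      _ = (C1 s + (1 + 1 / (8 * s - 3)) + 1) * r ^ (-(3:ℝ)/2) := by ring
      _ ≤ (C1 s + C2 s + (1 + 1 / (8 * s - 3)) + 1) * r ^ (-(3:ℝ)/2) :=
          mul_le_mul_of_nonneg_right (by linarith) hx

/-- **Summability over angular channels.** For `s ∈ (1/2, 3/4]` there is a constant `A_s`
such that `Σ_{κ ∈ ℤ\{0}} F_κ(r) ≤ A_s (r^{2s-3} 1_{r≤1} + r^{-3/2} 1_{r>1})` for all
`r > 0` (and the sum converges). -/
theorem channel_sum_bound (s : ℝ) (hs1 : 1 / 2 < s) (hs2 : s ≤ 3 / 4) :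
    ∃ A : ℝ, 0 < A ∧ ∀ r : ℝ, 0 < r →
      Summable (fun κ : ℤ => if κ = 0 then 0 else channelBound s κ r) ∧
      (∑' κ : ℤ, if κ = 0 then 0 else channelBound s κ r) ≤
        A * (if r ≤ 1 then r ^ (2 * s - 3) else r ^ (-(3 : ℝ) / 2)) := by
  set A₀ : ℝ := C1 s + C2 s + (1 + 1 / (8 * s - 3)) + 1 with hA₀
  have hεpos : (0:ℝ) < 8 * s - 3 := by linarith
  have hA₀pos : 0 < A₀ := by
    have := C1_nonneg s; have := C2_nonneg s
    have : (0:ℝ) ≤ 1 / (8 * s - 3) := by positivity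
    rw [hA₀]; linarith [C1_nonneg s, C2_nonneg s]
  refine ⟨2 * A₀, by linarith, fun r hr => ?_⟩
  obtain ⟨hsum, hbound⟩ := nat_bound hs1 hs2 hr
  set f : ℤ → ℝ := fun κ => if κ = 0 then 0 else channelBound s κ r with hf
  have hfnat : (fun n : ℕ => f (n : ℤ)) = Hfun s r := by
    funext n
    rcases Nat.eq_zero_or_pos n with h0 | h1
    · subst h0
      simp only [hf, Nat.cast_zero, if_pos rfl]
      simp [Hfun, chT1, chT2, chT3]
    · have hne : (n : ℤ) ≠ 0 := by exact_mod_cast Nat.pos_iff_ne_zero.mp h1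
      simp only [hf, if_neg hne]
      rw [channelBound_eq s r _ hne, Int.natAbs_natCast]
  have hfneg : (fun n : ℕ => f (-((n : ℤ) + 1))) = (fun n : ℕ => Hfun s r (n + 1)) := by
    funext n
    have hne : -((n : ℤ) + 1) ≠ 0 := by omega
    have habs : (-((n : ℤ) + 1)).natAbs = n + 1 := by
      rw [Int.natAbs_neg]; exact_mod_cast Int.natAbs_natCast (n + 1)
    simp only [hf, if_neg hne]
    rw [channelBound_eq s r _ hne, habs]
  have hsumneg : Summable (fun n : ℕ => f (-((n : ℤ) + 1))) := by
    rw [hfneg]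
    exact (summable_nat_add_iff 1).mpr hsum
  have hsumnat : Summable (fun n : ℕ => f (n : ℤ)) := by rw [hfnat]; exact hsum
  have hsummZ : Summable f := Summable.of_nat_of_neg_add_one hsumnat hsumneg
  refine ⟨hsummZ, ?_⟩
  have htsum : ∑' κ : ℤ, f κ = (∑' n : ℕ, f (n : ℤ)) + ∑' n : ℕ, f (-((n : ℤ) + 1)) :=
    tsum_of_nat_of_neg_add_one hsumnat hsumneg
  have hzero : Hfun s r 0 = 0 := by simp [Hfun, chT1, chT2, chT3]
  have hshift : ∑' n : ℕ, Hfun s r (n + 1) = ∑' n, Hfun s r n := by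
    rw [Summable.tsum_eq_zero_add hsum, hzero, zero_add]
  have : ∑' κ : ℤ, f κ = 2 * ∑' n, Hfun s r n := by
    rw [htsum, hfnat, hfneg, hshift]; ring
  rw [this]
  calc 2 * ∑' n, Hfun s r n ≤ 2 * (A₀ * (if r ≤ 1 then r ^ (2 * s - 3) else r ^ (-(3:ℝ)/2))) := by
        linarith [hbound]
    _ = 2 * A₀ * (if r ≤ 1 then r ^ (2 * s - 3) else r ^ (-(3:ℝ)/2)) := by ring
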